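/- arXiv:2306.17543 — 3 statements merged into one kernel-verified Lean document; each statement's English description precedes it below -/
import Mathlib

section
/- Assume α = 2πp/q where p, q are positive integers with gcd(p, q) = 1. Then the closure of the critical set is exactly the set of points whose orbit approaches the real axis: cl(𝓕) = {z ∈ ℂ : inf over integers n ≥ 0 of |Im(Fⁿ(z))| = 0}; equivalently, z ∈ cl(𝓕) if and only if for every ε > 0 there exists n ≥ 0 with |Im(Fⁿ(z))| < ε. -/
noncomputable def Hfun (z : ℂ) : ℂ := if 0 ≤ z.im then 1 else -1

noncomputable def Fmap (α : ℝ) (z : ℂ) : ℂ := Complex.exp (α * Complex.I) * (z - Hfun z)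

def critSet (α : ℝ) : Set ℂ := {z : ℂ | ∃ n : ℕ, ((Fmap α)^[n] z).im = 0}

def regSet (α : ℝ) : Set ℂ := (closure (critSet α))ᶜ

/-!
A point `z` lies outside `cl 𝓕` exactly when some ball `B(z, r)` misses `𝓕`. As long as the
orbit of `z` stays at distance `≥ r` from the real axis, `Hfun` is constant along the images of
`B(z, r)`, so `Fⁿ` acts on the ball as the rigid motion `w ↦ Fⁿ z + λⁿ (w - z)`; the image is then
the ball `B(Fⁿ z, r)`, which misses the real axis. Conversely, at the first time the orbit comes
within `r` of the real axis, this image ball meets it, which puts a point of `𝓕` in `B(z, r)`.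
-/

open Metric

lemma Hfun_eq_of_abs_im_sub_lt {u v : ℂ} {r : ℝ} (hu : r ≤ |u.im|) (h : |v.im - u.im| < r) :
    Hfun v = Hfun u := by
  obtain ⟨h₁, h₂⟩ := abs_lt.mp h
  unfold Hfun
  rcases le_abs'.mp hu with hu | hu
  · rw [if_neg (by linarith), if_neg (by linarith)]
  · rw [if_pos (by linarith), if_pos (by linarith)]

lemma im_ne_zero_of_abs_im_sub_lt {u v : ℂ} {r : ℝ} (hu : r ≤ |u.im|) (h : |v.im - u.im| < r) :
    v.im ≠ 0 := by
  obtain ⟨h₁, h₂⟩ := abs_lt.mp h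
  rcases le_abs'.mp hu with hu | hu <;> intro hv <;> linarith

lemma abs_im_exp_mul_I_pow_mul_lt (α : ℝ) (n : ℕ) {v : ℂ} {r : ℝ} (hv : ‖v‖ < r) :
    |(Complex.exp (α * Complex.I) ^ n * v).im| < r :=
  calc |(Complex.exp (α * Complex.I) ^ n * v).im|
      ≤ ‖Complex.exp (α * Complex.I) ^ n * v‖ := Complex.abs_im_le_norm _
    _ = ‖v‖ := by rw [norm_mul, norm_pow, Complex.norm_exp_ofReal_mul_I, one_pow, one_mul]
    _ < r := hv

lemma iterate_Fmap_eq_on_ball {α : ℝ} {z : ℂ} {r : ℝ} {n : ℕ}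
    (hfar : ∀ k < n, r ≤ |((Fmap α)^[k] z).im|) :
    ∀ w ∈ ball z r, (Fmap α)^[n] w =
      (Fmap α)^[n] z + Complex.exp (α * Complex.I) ^ n * (w - z) := by
  induction n with
  | zero => simp
  | succ n ih =>
    intro w hw
    have hwn := ih (fun k hk => hfar k (by omega)) w hw
    have hH : Hfun ((Fmap α)^[n] w) = Hfun ((Fmap α)^[n] z) := by
      refine Hfun_eq_of_abs_im_sub_lt (hfar n n.lt_succ_self) ?_
      rw [hwn, Complex.add_im, add_sub_cancel_left]
      exact abs_im_exp_mul_I_pow_mul_lt α n (by rwa [mem_ball, Complex.dist_eq] at hw)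
    rw [Function.iterate_succ_apply', Function.iterate_succ_apply', Fmap, Fmap, hH, hwn]
    ring

lemma exists_mem_critSet_ball {α : ℝ} {z : ℂ} {r : ℝ} {n : ℕ}
    (hrot : ∀ w ∈ ball z r, (Fmap α)^[n] w =
      (Fmap α)^[n] z + Complex.exp (α * Complex.I) ^ n * (w - z))
    (hnear : |((Fmap α)^[n] z).im| < r) :
    ∃ w ∈ ball z r, w ∈ critSet α := by
  set c := Complex.exp (α * Complex.I) ^ n
  set t := ((Fmap α)^[n] z).im
  have hc : c ≠ 0 := pow_ne_zero _ (Complex.exp_ne_zero _)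
  -- pull the vertical segment from `Fⁿ z` down to the real axis back through the rotation
  set w := z - c⁻¹ * (t * Complex.I)
  have hw : w ∈ ball z r := by
    rw [mem_ball, Complex.dist_eq, sub_sub_cancel_left, norm_neg, norm_mul, norm_inv,
      norm_pow, Complex.norm_exp_ofReal_mul_I, one_pow, inv_one, one_mul, norm_mul,
      Complex.norm_I, mul_one, Complex.norm_real, Real.norm_eq_abs]
    exact hnear
  refine ⟨w, hw, n, ?_⟩
  rw [hrot w hw, sub_sub_cancel_left, mul_neg, mul_inv_cancel_left₀ hc]
  simp [t]

lemma notMem_critSet_of_forall_le_abs_im {α : ℝ} {z : ℂ} {r : ℝ}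
    (hfar : ∀ n, r ≤ |((Fmap α)^[n] z).im|) : ∀ w ∈ ball z r, w ∉ critSet α := by
  rintro w hw ⟨n, hn⟩
  refine im_ne_zero_of_abs_im_sub_lt (hfar n) ?_ hn
  rw [iterate_Fmap_eq_on_ball (fun k _ => hfar k) w hw, Complex.add_im, add_sub_cancel_left]
  exact abs_im_exp_mul_I_pow_mul_lt α n (by rwa [mem_ball, Complex.dist_eq] at hw)

theorem mem_closure_critSet_iff (α : ℝ) (z : ℂ) :
    z ∈ closure (critSet α) ↔ ∀ ε : ℝ, 0 < ε → ∃ n : ℕ, |((Fmap α)^[n] z).im| < ε := by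
  rw [Metric.mem_closure_iff]
  constructor
  · intro hz ε hε
    by_contra! hfar
    obtain ⟨w, hw, hwz⟩ := hz ε hε
    exact notMem_critSet_of_forall_le_abs_im hfar w (by rwa [mem_ball, dist_comm]) hw
  · intro hnear ε hε
    classical
    -- the first time the orbit comes within `ε` of the real axis
    have hrot := iterate_Fmap_eq_on_ball (fun k hk => not_lt.mp (Nat.find_min (hnear ε hε) hk))
    obtain ⟨w, hw, hwc⟩ := exists_mem_critSet_ball hrot (Nat.find_spec (hnear ε hε))
    exact ⟨w, hwc, by rwa [dist_comm, ← mem_ball]⟩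

theorem Real.ciInf_eq_zero_iff_forall_exists_lt {ι : Type*} [Nonempty ι] {f : ι → ℝ}
    (hf : ∀ i, 0 ≤ f i) : ⨅ i, f i = 0 ↔ ∀ ε : ℝ, 0 < ε → ∃ i, f i < ε :=
  ⟨fun h _ hε => exists_lt_of_ciInf_lt (h ▸ hε),
    fun h => ciInf_eq_of_forall_ge_of_forall_gt_exists_lt hf h⟩

theorem stmt14_general (α : ℝ) :
    closure (critSet α) = {z : ℂ | (⨅ n : ℕ, |((Fmap α)^[n] z).im|) = 0} ∧
      ∀ z : ℂ, z ∈ closure (critSet α) ↔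
        ∀ ε : ℝ, 0 < ε → ∃ n : ℕ, |((Fmap α)^[n] z).im| < ε :=
  ⟨Set.ext fun z => (mem_closure_critSet_iff α z).trans
      (Real.ciInf_eq_zero_iff_forall_exists_lt fun _ => abs_nonneg _).symm,
    mem_closure_critSet_iff α⟩

/-- the closure of the critical set is exactly the set of points
    whose orbit approaches the real axis. -/
theorem stmt14 (p q : ℕ) (hp : 0 < p) (hq : 0 < q) (hpq : Nat.gcd p q = 1)
    (α : ℝ) (hα : α = 2 * Real.pi * p / q) :
    closure (critSet α) = {z : ℂ | (⨅ n : ℕ, |((Fmap α)^[n] z).im|) = 0} ∧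
      ∀ z : ℂ, z ∈ closure (critSet α) ↔
        ∀ ε : ℝ, 0 < ε → ∃ n : ℕ, |((Fmap α)^[n] z).im| < ε :=
  stmt14_general α
end

section
/- Assume α = 2πp/q where p, q are positive integers with gcd(p, q) = 1. Then every point of cl(𝓕) \ 𝓕 is aperiodic: if z ∈ cl(𝓕) and z ∉ 𝓕, then Fⁿ(z) ≠ z for every integer n ≥ 1. -/
/-!
A periodic orbit that never meets the real axis stays at some distance `δ > 0` from it.
A point `w` with `‖w - z‖ < δ` then lies in the same half-plane as `Fⁿ z` for every `n`,
so `F` acts on the pair by one and the same rotation at every step,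
`‖Fⁿ w - Fⁿ z‖ = ‖w - z‖` for all `n`, and the orbit of `w` never meets the real axis either.
Hence the `δ`-ball around `z` misses `𝓕`, and `z ∉ cl 𝓕`.
-/

theorem Function.IsPeriodicPt.exists_pos_forall_le_of_forall_pos {α : Type*} {f : α → α}
    {n : ℕ} {x : α} (hx : Function.IsPeriodicPt f n x) (hn : 0 < n) {g : α → ℝ}
    (hg : ∀ k, 0 < g (f^[k] x)) : ∃ δ > 0, ∀ m, δ ≤ g (f^[m] x) := by
  have hne : (Finset.range n).Nonempty := Finset.nonempty_range_iff.mpr hn.ne'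
  refine ⟨(Finset.range n).inf' hne (fun k => g (f^[k] x)),
    (Finset.lt_inf'_iff _).mpr fun k _ => hg k, fun m => ?_⟩
  rw [← hx.iterate_mod_apply m]
  exact Finset.inf'_le _ (Finset.mem_range.mpr (Nat.mod_lt m hn))

lemma abs_im_sub_lt_of_norm_sub_lt {w z : ℂ} {r : ℝ} (h : ‖w - z‖ < r) :
    |w.im - z.im| < r :=
  lt_of_le_of_lt (by simpa using Complex.abs_im_le_norm (w - z)) h

lemma Hfun_eq_of_norm_sub_lt_abs_im {w z : ℂ} (h : ‖w - z‖ < |z.im|) : Hfun w = Hfun z := by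
  have him := abs_lt.mp (abs_im_sub_lt_of_norm_sub_lt h)
  unfold Hfun
  rcases lt_or_ge z.im 0 with hz | hz
  · rw [abs_of_neg hz] at him
    have hw : w.im < 0 := by linarith
    simp [hz.not_ge, hw.not_ge]
  · rw [abs_of_nonneg hz] at him
    have hw : 0 ≤ w.im := by linarith
    simp [hz, hw]

lemma norm_Fmap_sub_Fmap (α : ℝ) {w z : ℂ} (h : Hfun w = Hfun z) :
    ‖Fmap α w - Fmap α z‖ = ‖w - z‖ := by
  have : Fmap α w - Fmap α z = Complex.exp (α * Complex.I) * (w - z) := by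
    simp only [Fmap, h]; ring
  rw [this, norm_mul, Complex.norm_exp_ofReal_mul_I, one_mul]

lemma norm_iterate_Fmap_sub (α : ℝ) {w z : ℂ}
    (h : ∀ m, ‖w - z‖ < |((Fmap α)^[m] z).im|) (m : ℕ) :
    ‖(Fmap α)^[m] w - (Fmap α)^[m] z‖ = ‖w - z‖ := by
  induction m with
  | zero => simp
  | succ m ih =>
    rw [Function.iterate_succ_apply', Function.iterate_succ_apply']
    exact (norm_Fmap_sub_Fmap α (Hfun_eq_of_norm_sub_lt_abs_im (ih ▸ h m))).trans ih

lemma notMem_closure_critSet_of_forall_le_abs_im (α : ℝ) {z : ℂ} {δ : ℝ} (hδ : 0 < δ)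
    (hz : ∀ m, δ ≤ |((Fmap α)^[m] z).im|) : z ∉ closure (critSet α) := by
  intro hcl
  obtain ⟨w, ⟨m, hm⟩, hwz⟩ := Metric.mem_closure_iff.mp hcl δ hδ
  rw [dist_comm, dist_eq_norm] at hwz
  have hclose : ∀ k, ‖w - z‖ < |((Fmap α)^[k] z).im| := fun k => hwz.trans_le (hz k)
  have him := abs_im_sub_lt_of_norm_sub_lt
    ((norm_iterate_Fmap_sub α hclose m).trans_lt (hclose m))
  rw [hm, zero_sub, abs_neg] at him
  exact lt_irrefl _ him

theorem stmt15_general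
    (α : ℝ)
    (z : ℂ) (hz : z ∈ closure (critSet α)) (hz' : z ∉ critSet α) :
    ∀ n : ℕ, 1 ≤ n → (Fmap α)^[n] z ≠ z := by
  intro n hn hfix
  have hoff : ∀ k, 0 < |((Fmap α)^[k] z).im| := fun k =>
    abs_pos.mpr fun h => hz' ⟨k, h⟩
  obtain ⟨δ, hδ, hfar⟩ := Function.IsPeriodicPt.exists_pos_forall_le_of_forall_pos hfix hn
    (g := fun w => |w.im|) hoff
  exact notMem_closure_critSet_of_forall_le_abs_im α hδ hfar hz

/-- every point of cl(𝓕) \ 𝓕 is aperiodic. -/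
theorem stmt15 (p q : ℕ) (hp : 0 < p) (hq : 0 < q) (hpq : Nat.gcd p q = 1)
    (α : ℝ) (hα : α = 2 * Real.pi * p / q)
    (z : ℂ) (hz : z ∈ closure (critSet α)) (hz' : z ∉ critSet α) :
    ∀ n : ℕ, 1 ≤ n → (Fmap α)^[n] z ≠ z :=
  stmt15_general α z hz hz'
end

section
/- Assume α = 2πp/q where p, q are positive integers with gcd(p, q) = 1. Let V be a connected component of the regular set 𝓤 and let z ∈ V. Then V equals the set of all points of 𝓤 having the same itinerary as z, namely V = {w ∈ 𝓤 : for every integer n ≥ 0, Im(Fⁿ(w)) > 0 ↔ Im(Fⁿ(z)) > 0}; in particular, every connected component of 𝓤 is convex. -/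
lemma nonneg_iff_nonneg_of_abs_sub_lt {a b : ℝ} (h : |a - b| < |b|) : 0 ≤ a ↔ 0 ≤ b := by
  obtain ⟨h₁, h₂⟩ := abs_sub_lt_iff.1 h
  rcases le_or_gt 0 b with hb | hb
  · rw [abs_of_nonneg hb] at h₁ h₂
    constructor <;> intro <;> linarith
  · rw [abs_of_neg hb] at h₁ h₂
    constructor <;> intro <;> linarith

lemma pos_iff_pos_of_abs_sub_lt {a b : ℝ} (h : |a - b| < |b|) : 0 < a ↔ 0 < b := by
  have h' := nonneg_iff_nonneg_of_abs_sub_lt (a := -a) (b := -b)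
    (by rwa [← neg_sub', abs_neg, abs_neg])
  rw [neg_nonneg, neg_nonneg] at h'
  rw [← not_le, ← not_le, h']

lemma nonneg_iff_nonneg_of_pos_iff_pos {a b : ℝ} (ha : a ≠ 0) (hb : b ≠ 0)
    (h : 0 < a ↔ 0 < b) : 0 ≤ a ↔ 0 ≤ b := by
  rw [le_iff_lt_or_eq, le_iff_lt_or_eq, h]
  simp [ha.symm, hb.symm]

lemma le_abs_convexComb {a b x y δ : ℝ} (ha : 0 ≤ a) (hb : 0 ≤ b) (hab : a + b = 1)
    (hδ : 0 < δ) (hx : δ ≤ |x|) (hy : δ ≤ |y|) (hxy : 0 < x ↔ 0 < y) :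
    δ ≤ |a * x + b * y| ∧ (0 < a * x + b * y ↔ 0 < x) := by
  rcases lt_or_gt_of_ne (show x ≠ 0 by rintro rfl; simp at hx; linarith) with hx₀ | hx₀
  · have hy₀ : y < 0 := by
      by_contra! hy₀
      rcases hy₀.lt_or_eq with hy₀ | rfl
      · linarith [hxy.2 hy₀]
      · simp at hy; linarith
    rw [abs_of_neg hx₀] at hx
    rw [abs_of_neg hy₀] at hy
    have : a * x + b * y ≤ -δ := by nlinarith
    rw [abs_of_neg (by linarith)]
    exact ⟨by linarith, by constructor <;> intro <;> linarith⟩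
  · have hy₀ : 0 < y := hxy.1 hx₀
    rw [abs_of_pos hx₀] at hx
    rw [abs_of_pos hy₀] at hy
    have : δ ≤ a * x + b * y := by nlinarith
    rw [abs_of_pos (by linarith)]
    exact ⟨this, by constructor <;> intro <;> linarith⟩

lemma Hfun_eq_of_nonneg_iff {x y : ℂ} (h : 0 ≤ x.im ↔ 0 ≤ y.im) : Hfun x = Hfun y := by
  unfold Hfun
  split_ifs <;> tauto

lemma Hfun_eq_of_norm_sub_lt {x y : ℂ} (h : ‖x - y‖ < |y.im|) : Hfun x = Hfun y := by
  refine Hfun_eq_of_nonneg_iff (nonneg_iff_nonneg_of_abs_sub_lt ?_)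
  simpa using (Complex.abs_im_le_norm (x - y)).trans_lt h

open Topology

lemma norm_exp_mul_I_pow_mul (α : ℝ) (n : ℕ) (w : ℂ) :
    ‖Complex.exp (α * Complex.I) ^ n * w‖ = ‖w‖ := by
  rw [norm_mul, norm_pow, Complex.norm_exp_ofReal_mul_I, one_pow, one_mul]

section

variable {α : ℝ}

lemma Fmap_sub_Fmap {x y : ℂ} (h : Hfun x = Hfun y) :
    Fmap α x - Fmap α y = Complex.exp (α * Complex.I) * (x - y) := by
  unfold Fmap
  rw [h]
  ring

lemma Fmap_convexComb {x y : ℂ} {a b : ℝ} (hab : a + b = 1)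
    (hx : Hfun x = Hfun (a • x + b • y)) (hy : Hfun y = Hfun (a • x + b • y)) :
    Fmap α (a • x + b • y) = a • Fmap α x + b • Fmap α y := by
  have hab' : (a : ℂ) + b = 1 := by exact_mod_cast hab
  unfold Fmap
  rw [hx, hy, Complex.real_smul, Complex.real_smul, Complex.real_smul, Complex.real_smul]
  linear_combination (Complex.exp (α * Complex.I) * Hfun (a • x + b • y)) * hab'

lemma iterate_Fmap_sub {y z : ℂ} {n : ℕ} (h : ∀ k < n, ‖y - z‖ < |((Fmap α)^[k] z).im|) :
    (Fmap α)^[n] y - (Fmap α)^[n] z = Complex.exp (α * Complex.I) ^ n * (y - z) := by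
  induction n with
  | zero => simp
  | succ n ih =>
    have ih := ih fun k hk => h k (Nat.lt_succ_of_lt hk)
    have hnorm : ‖(Fmap α)^[n] y - (Fmap α)^[n] z‖ = ‖y - z‖ := by
      rw [ih, norm_exp_mul_I_pow_mul]
    rw [Function.iterate_succ_apply', Function.iterate_succ_apply',
      Fmap_sub_Fmap (Hfun_eq_of_norm_sub_lt (hnorm.trans_lt (h n n.lt_succ_self))), ih]
    ring

lemma abs_im_iterate_sub_lt {y z : ℂ} {δ : ℝ} (hz : ∀ n, δ ≤ |((Fmap α)^[n] z).im|)
    (hyz : ‖y - z‖ < δ) (n : ℕ) :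
    |((Fmap α)^[n] y).im - ((Fmap α)^[n] z).im| < δ := by
  have h := iterate_Fmap_sub (n := n) fun k _ => hyz.trans_le (hz k)
  calc |((Fmap α)^[n] y).im - ((Fmap α)^[n] z).im|
      ≤ ‖(Fmap α)^[n] y - (Fmap α)^[n] z‖ := by
        simpa using Complex.abs_im_le_norm ((Fmap α)^[n] y - (Fmap α)^[n] z)
    _ = ‖y - z‖ := by rw [h, norm_exp_mul_I_pow_mul]
    _ < δ := hyz

lemma mem_regSet_iff {z : ℂ} :
    z ∈ regSet α ↔ ∃ δ > 0, ∀ n, δ ≤ |((Fmap α)^[n] z).im| := by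
  constructor
  · intro hz
    obtain ⟨ε, hε, hball⟩ := Metric.isOpen_iff.1 isClosed_closure.isOpen_compl z hz
    refine ⟨ε, hε, fun n => ?_⟩
    induction n using Nat.strong_induction_on with
    | _ n ih =>
      by_contra! hlt
      set c := ((Fmap α)^[n] z).im
      -- `y` is shadowed by `z` up to time `n`, and its `n`-th iterate lands on the real axis
      set y := z - (Complex.exp (α * Complex.I) ^ n)⁻¹ * (c * Complex.I)
      have hne : Complex.exp (α * Complex.I) ^ n ≠ 0 := pow_ne_zero _ (Complex.exp_ne_zero _)
      have hyz : ‖y - z‖ = |c| := by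
        simp [y, norm_inv, norm_pow, Complex.norm_exp_ofReal_mul_I]
      have hshadow := iterate_Fmap_sub (n := n) (y := y) fun k hk => hyz ▸ hlt.trans_le (ih k hk)
      have hcrit : y ∈ critSet α := by
        refine ⟨n, ?_⟩
        have hstep : Complex.exp (α * Complex.I) ^ n * (y - z) = -(c * Complex.I) := by
          simp [y, hne]
        rw [sub_eq_iff_eq_add'.1 hshadow, hstep]
        simp [c]
      exact hball (by rwa [Metric.mem_ball, dist_eq_norm, hyz]) (subset_closure hcrit)
  · rintro ⟨δ, hδ, hz⟩ hcl
    obtain ⟨y, ⟨n, hn⟩, hyz⟩ := Metric.mem_closure_iff.1 hcl δ hδ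
    have h := abs_im_iterate_sub_lt hz (by rwa [← dist_eq_norm, dist_comm]) n
    rw [hn, zero_sub, abs_neg] at h
    exact (hz n).not_gt h

lemma eventually_pos_im_iterate_iff {z : ℂ} (hz : z ∈ regSet α) (n : ℕ) :
    ∀ᶠ y in 𝓝 z, (0 < ((Fmap α)^[n] y).im ↔ 0 < ((Fmap α)^[n] z).im) := by
  obtain ⟨δ, hδ, hgap⟩ := mem_regSet_iff.1 hz
  filter_upwards [Metric.ball_mem_nhds z hδ] with y hy
  rw [Metric.mem_ball, dist_eq_norm] at hy
  exact pos_iff_pos_of_abs_sub_lt ((abs_im_iterate_sub_lt hgap hy n).trans_le (hgap n))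

lemma iterate_Fmap_convexComb {x y : ℂ} (hx : ∀ n, ((Fmap α)^[n] x).im ≠ 0)
    (hy : ∀ n, ((Fmap α)^[n] y).im ≠ 0)
    (hxy : ∀ n, (0 < ((Fmap α)^[n] x).im ↔ 0 < ((Fmap α)^[n] y).im))
    {a b : ℝ} (ha : 0 ≤ a) (hb : 0 ≤ b) (hab : a + b = 1) (n : ℕ) :
    (Fmap α)^[n] (a • x + b • y) = a • (Fmap α)^[n] x + b • (Fmap α)^[n] y := by
  induction n with
  | zero => simp
  | succ n ih =>
    set u := (Fmap α)^[n] x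
    set v := (Fmap α)^[n] y
    have hδ : 0 < min |u.im| |v.im| := lt_min (abs_pos.2 (hx n)) (abs_pos.2 (hy n))
    have hcomb := le_abs_convexComb ha hb hab hδ (min_le_left _ _) (min_le_right _ _) (hxy n)
    have him : (a • u + b • v).im = a * u.im + b * v.im := by simp
    have hne : (a • u + b • v).im ≠ 0 := by
      rw [him]; exact abs_pos.1 (hδ.trans_le hcomb.1)
    have hu : Hfun u = Hfun (a • u + b • v) := Hfun_eq_of_nonneg_iff
      (nonneg_iff_nonneg_of_pos_iff_pos (hx n) hne (him ▸ hcomb.2).symm)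
    have hv : Hfun v = Hfun (a • u + b • v) := Hfun_eq_of_nonneg_iff
      (nonneg_iff_nonneg_of_pos_iff_pos (hy n) hne ((hxy n).symm.trans (him ▸ hcomb.2).symm))
    rw [Function.iterate_succ_apply', Function.iterate_succ_apply',
      Function.iterate_succ_apply', ih, Fmap_convexComb hab hu hv]

end

def itineraryClass (α : ℝ) (z : ℂ) : Set ℂ :=
  {w : ℂ | w ∈ regSet α ∧ ∀ n : ℕ, (0 < ((Fmap α)^[n] w).im ↔ 0 < ((Fmap α)^[n] z).im)}

lemma im_iterate_ne_zero_of_mem_regSet {α : ℝ} {z : ℂ} (hz : z ∈ regSet α) (n : ℕ) :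
    ((Fmap α)^[n] z).im ≠ 0 :=
  fun h => hz (subset_closure ⟨n, h⟩)

lemma convex_itineraryClass (α : ℝ) (z : ℂ) : Convex ℝ (itineraryClass α z) := by
  rintro x ⟨hx, hxz⟩ y ⟨hy, hyz⟩ a b ha hb hab
  obtain ⟨δx, hδx, hgapx⟩ := mem_regSet_iff.1 hx
  obtain ⟨δy, hδy, hgapy⟩ := mem_regSet_iff.1 hy
  have hxy n := (hxz n).trans (hyz n).symm
  have hcomb n := le_abs_convexComb ha hb hab (lt_min hδx hδy)
    ((min_le_left _ _).trans (hgapx n)) ((min_le_right _ _).trans (hgapy n)) (hxy n)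
  have hiter := iterate_Fmap_convexComb (im_iterate_ne_zero_of_mem_regSet hx)
    (im_iterate_ne_zero_of_mem_regSet hy) hxy ha hb hab
  have him n : ((Fmap α)^[n] (a • x + b • y)).im
      = a * ((Fmap α)^[n] x).im + b * ((Fmap α)^[n] y).im := by
    rw [hiter]; simp
  exact ⟨mem_regSet_iff.2 ⟨_, lt_min hδx hδy, fun n => him n ▸ (hcomb n).1⟩,
    fun n => by rw [him, (hcomb n).2, hxz n]⟩

lemma connectedComponentIn_regSet_eq {α : ℝ} {z : ℂ} (hz : z ∈ regSet α) :
    connectedComponentIn (regSet α) z = itineraryClass α z := by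
  refine subset_antisymm (fun w hw => ⟨connectedComponentIn_subset _ _ hw, fun n => ?_⟩)
    ((convex_itineraryClass α z).isPreconnected.subset_connectedComponentIn
      ⟨hz, fun _ => Iff.rfl⟩ fun w hw => hw.1)
  -- encoded in `Bool`, which is discrete, unlike `Prop` (the Sierpiński space)
  have hcont : ContinuousOn (fun u => decide (0 < ((Fmap α)^[n] u).im))
      (connectedComponentIn (regSet α) z) := fun u hu =>
    (ContinuousAt.congr (f := fun _ => decide (0 < ((Fmap α)^[n] u).im)) continuousAt_const
      ((eventually_pos_im_iterate_iff (connectedComponentIn_subset _ _ hu) n).mono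
        fun y hy => by simp [hy])).continuousWithinAt
  simpa using isPreconnected_connectedComponentIn.constant hcont hw (mem_connectedComponentIn hz)

theorem stmt18_general (α : ℝ) (V : Set ℂ) (z : ℂ) (hz : z ∈ regSet α)
    (hV : V = connectedComponentIn (regSet α) z) :
    V = {w : ℂ | w ∈ regSet α ∧ ∀ n : ℕ,
        (0 < ((Fmap α)^[n] w).im ↔ 0 < ((Fmap α)^[n] z).im)} ∧
      Convex ℝ V := by
  rw [hV, connectedComponentIn_regSet_eq hz]
  exact ⟨rfl, convex_itineraryClass α z⟩

/-- each connected component of the regular set equals the set of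
    points of the regular set with the same itinerary; in particular it is
    convex. -/
theorem stmt18 (p q : ℕ) (hp : 0 < p) (hq : 0 < q) (hpq : Nat.gcd p q = 1)
    (α : ℝ) (hα : α = 2 * Real.pi * p / q)
    (V : Set ℂ) (z : ℂ) (hz : z ∈ regSet α)
    (hV : V = connectedComponentIn (regSet α) z) :
    V = {w : ℂ | w ∈ regSet α ∧ ∀ n : ℕ,
        (0 < ((Fmap α)^[n] w).im ↔ 0 < ((Fmap α)^[n] z).im)} ∧
      Convex ℝ V :=
  stmt18_general α V z hz hV
end
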